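/- arXiv:math/0403012 — 3 statements merged into one kernel-verified Lean document; each statement's English description precedes it below -/
import Mathlib

section
/- Let a,b ∈ ℂ∖{0} and z ∈ ℂ with Re(z) > 0 and exp(Re z) > sqrt(|2b/a|). Set w = a·e^z + b·e^{-z}. Then z ∈ Log(w/a) − Log(1 + (b/a)·e^{−2z}) + 2πi·ℤ, and |Log(1 + (b/a)·e^{−2z})| < 2·ln 2 · |(b/a)·e^{−2z}| < 1. -/
/-!
Put `u = (b / a) e^{-2z}`, so that `w / a = e^z (1 + u)`; the growth hypothesis says exactly
`‖u‖ < 1 / 2`. Hence `1 + u ≠ 0` and `Log (w / a) - Log (1 + u)` is a logarithm of `e^z`, i.e. it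
differs from `z` by an element of `2πiℤ`. Comparing the Taylor series of `Log (1 + u)` termwise with
that of `-log (1 - ‖u‖)` gives `‖Log (1 + u)‖ ≤ -log (1 - ‖u‖)`, and strict convexity of
`t ↦ -log (1 - t)`, which vanishes at `0` and equals `log 2` at `1 / 2`, gives
`-log (1 - t) < 2 log 2 · t` on `(0, 1 / 2)`.
-/

open Complex

lemma Real.hasSum_pow_div_neg_log_one_sub {t : ℝ} (ht : |t| < 1) :
    HasSum (fun n : ℕ ↦ t ^ n / n) (-Real.log (1 - t)) := by
  have h := hasSum_taylorSeries_neg_log (z := (t : ℂ)) (by simpa using ht)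
  have hlt : t < 1 := (abs_lt.mp ht).2
  refine Complex.hasSum_ofReal.mp ?_
  convert h using 1 with n
  · push_cast; ring
  · push_cast
    rw [ofReal_log (by linarith)]
    push_cast; ring

lemma Complex.norm_log_one_add_le_neg_log_one_sub_norm {z : ℂ} (hz : ‖z‖ < 1) :
    ‖log (1 + z)‖ ≤ -Real.log (1 - ‖z‖) := by
  have hr := Real.hasSum_pow_div_neg_log_one_sub (t := ‖z‖) (by rwa [abs_norm])
  have hnorm : ∀ n : ℕ, ‖(-1 : ℂ) ^ (n + 1) * z ^ n / n‖ = ‖z‖ ^ n / n := by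
    simp
  calc ‖log (1 + z)‖ = ‖∑' n : ℕ, (-1 : ℂ) ^ (n + 1) * z ^ n / n‖ := by
        rw [(hasSum_taylorSeries_log hz).tsum_eq]
    _ ≤ ∑' n : ℕ, ‖(-1 : ℂ) ^ (n + 1) * z ^ n / n‖ :=
        norm_tsum_le_tsum_norm (hr.summable.congr fun n ↦ (hnorm n).symm)
    _ = -Real.log (1 - ‖z‖) := (tsum_congr hnorm).trans hr.tsum_eq

lemma Real.neg_log_one_sub_lt_two_mul_log_two_mul {t : ℝ} (ht₀ : 0 < t) (ht : t < 1 / 2) :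
    -Real.log (1 - t) < 2 * Real.log 2 * t := by
  have h := strictConcaveOn_log_Ioi.2 (Set.mem_Ioi.mpr one_pos)
    (Set.mem_Ioi.mpr (by norm_num : (0 : ℝ) < 1 / 2)) (by norm_num)
    (by linarith : (0 : ℝ) < 1 - 2 * t) (by linarith : (0 : ℝ) < 2 * t) (by ring)
  have hcomb : (1 - 2 * t) * 1 + 2 * t * (1 / 2) = 1 - t := by ring
  simp only [smul_eq_mul, Real.log_one, mul_zero, zero_add, one_div, Real.log_inv] at h
  rw [← one_div, hcomb] at h
  linarith

lemma Complex.exists_eq_log_sub_log_add_int_mul {z v : ℂ} (hv : v ≠ 0) :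
    ∃ n : ℤ, z = log (exp z * v) - log v + 2 * Real.pi * I * n := by
  have hexp : exp (log (exp z * v) - log v) = exp z := by
    rw [exp_sub, exp_log (mul_ne_zero (exp_ne_zero z) hv), exp_log hv, mul_div_cancel_right₀ _ hv]
  obtain ⟨n, hn⟩ := exp_eq_exp_iff_exists_int.mp hexp
  exact ⟨-n, by rw [hn]; push_cast; ring⟩

lemma Complex.mul_exp_add_mul_exp_neg_div_eq {a : ℂ} (ha : a ≠ 0) (b z : ℂ) :
    (a * exp z + b * exp (-z)) / a = exp z * (1 + b / a * exp (-2 * z)) := by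
  have hexp : exp (-z) = exp z * exp (-2 * z) := by rw [← exp_add]; ring_nf
  rw [hexp]
  field_simp

lemma Complex.norm_div_mul_exp_neg_two_mul_lt_half {a b z : ℂ}
    (hgrow : Real.sqrt (2 * ‖b‖ / ‖a‖) < Real.exp z.re) :
    ‖b / a * exp (-2 * z)‖ < 1 / 2 := by
  have hsq : 2 * ‖b‖ / ‖a‖ < Real.exp z.re ^ 2 :=
    (Real.sqrt_lt' (Real.exp_pos _)).mp hgrow
  have hnorm : ‖b / a * exp (-2 * z)‖ = ‖b‖ / ‖a‖ / Real.exp z.re ^ 2 := by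
    rw [norm_mul, norm_div, norm_exp, ← Real.exp_nat_mul, div_eq_mul_inv (_ / _),
      ← Real.exp_neg]
    norm_num
  rw [hnorm, div_lt_iff₀ (by positivity)]
  rw [mul_div_assoc] at hsq
  linarith

theorem inverse_branch_control_general (a b z : ℂ) (ha : a ≠ 0) (hb : b ≠ 0)
    (hgrow : Real.sqrt (2 * ‖b‖ / ‖a‖) < Real.exp z.re) :
    (∃ n : ℤ, z = Complex.log ((a * Complex.exp z + b * Complex.exp (-z)) / a)
        - Complex.log (1 + b / a * Complex.exp (-2 * z)) + 2 * Real.pi * Complex.I * n) ∧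
    ‖Complex.log (1 + b / a * Complex.exp (-2 * z))‖ <
      2 * Real.log 2 * ‖b / a * Complex.exp (-2 * z)‖ ∧
    2 * Real.log 2 * ‖b / a * Complex.exp (-2 * z)‖ < 1 := by
  set u := b / a * exp (-2 * z)
  have hu_half : ‖u‖ < 1 / 2 := norm_div_mul_exp_neg_two_mul_lt_half hgrow
  have hu_pos : 0 < ‖u‖ := norm_pos_iff.mpr (mul_ne_zero (div_ne_zero hb ha) (exp_ne_zero _))
  have hu_one : ‖u‖ < 1 := by linarith
  have h1u : 1 + u ≠ 0 := fun h ↦ by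
    rw [eq_neg_of_add_eq_zero_right h, norm_neg, norm_one] at hu_one
    exact lt_irrefl _ hu_one
  refine ⟨?_, ?_, ?_⟩
  · rw [mul_exp_add_mul_exp_neg_div_eq ha]
    exact exists_eq_log_sub_log_add_int_mul h1u
  · exact (norm_log_one_add_le_neg_log_one_sub_norm hu_one).trans_lt
      (Real.neg_log_one_sub_lt_two_mul_log_two_mul hu_pos hu_half)
  · have hlog2 : Real.log 2 < 1 := by linarith [Real.log_two_lt_d9]
    nlinarith [Real.log_pos (by norm_num : (1 : ℝ) < 2)]

theorem inverse_branch_control (a b z : ℂ) (ha : a ≠ 0) (hb : b ≠ 0)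
    (hre : 0 < z.re)
    (hgrow : Real.sqrt (2 * ‖b‖ / ‖a‖) < Real.exp z.re) :
    (∃ n : ℤ, z = Complex.log ((a * Complex.exp z + b * Complex.exp (-z)) / a)
        - Complex.log (1 + b / a * Complex.exp (-2 * z)) + 2 * Real.pi * Complex.I * n) ∧
    ‖Complex.log (1 + b / a * Complex.exp (-2 * z))‖ <
      2 * Real.log 2 * ‖b / a * Complex.exp (-2 * z)‖ ∧
    2 * Real.log 2 * ‖b / a * Complex.exp (-2 * z)‖ < 1 :=
  inverse_branch_control_general a b z ha hb hgrow
end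

section
/- Let F(t) = e^t − 1, let s : ℕ → ℤ with minimal potential t_s := inf{ t > 0 : |s_k|/F^{∘(k−1)}(t) → 0 as k → ∞ } finite. Then t_{σ(s)} = F(t_s), where σ(s)_k = s_{k+1}. -/
open Filter

private noncomputable def Fe : ℝ → ℝ := fun u => Real.exp u - 1

private lemma Fe_strictMono : StrictMono Fe := fun a b h => by
  simpa [Fe] using Real.exp_lt_exp.2 h

private lemma le_Fe (u : ℝ) : u ≤ Fe u := by
  have := Real.add_one_le_exp u
  simp only [Fe]; linarith

private lemma le_iter (u : ℝ) (k : ℕ) : u ≤ Fe^[k] u := by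
  induction k with
  | zero => simp
  | succ n ih =>
    rw [Function.iterate_succ_apply']
    exact ih.trans (le_Fe _)

private lemma iter_pos {t : ℝ} (ht : 0 < t) (k : ℕ) : 0 < Fe^[k] t :=
  lt_of_lt_of_le ht (le_iter t k)

private lemma gap_lemma {x t : ℝ} (hxt : x < t) :
    ∀ k, (t - x) * (Real.exp x) ^ k ≤ Fe^[k] t - Fe^[k] x := by
  intro k
  induction k with
  | zero => simp
  | succ n ih =>
    set a := Fe^[n] x with ha
    set b := Fe^[n] t with hb
    have hax : x ≤ a := le_iter x n
    have hnn : 0 ≤ (t - x) * Real.exp x ^ n :=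
      mul_nonneg (by linarith) (pow_nonneg (Real.exp_pos x).le n)
    have h1 : b - a ≤ Real.exp (b - a) - 1 := by
      linarith [Real.add_one_le_exp (b - a)]
    have key : (t - x) * Real.exp x ^ (n + 1) ≤ Real.exp b - Real.exp a := by
      calc (t - x) * Real.exp x ^ (n + 1)
          = Real.exp x * ((t - x) * Real.exp x ^ n) := by ring
        _ ≤ Real.exp a * (b - a) :=
            mul_le_mul (Real.exp_le_exp.2 hax) ih hnn (Real.exp_pos a).le
        _ ≤ Real.exp a * (Real.exp (b - a) - 1) :=
            mul_le_mul_of_nonneg_left h1 (Real.exp_pos a).le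
        _ = Real.exp b - Real.exp a := by
            rw [mul_sub, ← Real.exp_add]; ring_nf
    rw [Function.iterate_succ_apply', Function.iterate_succ_apply']
    simpa [Fe, ← ha, ← hb] using by linarith

private lemma tendsto_mem {s : ℕ → ℤ} {x t : ℝ} (hx : 0 < x) (hxt : x < t)
    (hbound : ∀ k, (|s (k + 1)| : ℝ) ≤ Fe^[k] x) :
    Tendsto (fun k => (|s (k + 1)| : ℝ) / Fe^[k] t) atTop (nhds 0) := by
  have ht : 0 < t := hx.trans hxt
  rw [← tendsto_add_atTop_iff_nat 1]
  have hg : Tendsto (fun k : ℕ => Real.exp (-((t - x) * Real.exp x ^ k)))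
      atTop (nhds 0) := by
    apply Real.tendsto_exp_atBot.comp
    apply tendsto_neg_atTop_atBot.comp
    exact (tendsto_pow_atTop_atTop_of_one_lt
      (by simpa using Real.exp_lt_exp.2 hx : (1:ℝ) < Real.exp x)).const_mul_atTop
      (by linarith)
  apply squeeze_zero (fun k => div_nonneg (abs_nonneg _) (iter_pos ht _).le) _ hg
  intro k
  set a := Fe^[k] x
  set b := Fe^[k] t
  have hab : a ≤ b := by have := gap_lemma hxt k
                         nlinarith [pow_nonneg (Real.exp_pos x).le k]
  have hb1 : 0 < Fe^[k + 1] t := iter_pos ht _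
  have hs : (|s (k + 1 + 1)| : ℝ) ≤ Fe^[k + 1] x := hbound (k + 1)
  have hstep : Fe^[k + 1] x ≤ Real.exp (a - b) * Fe^[k + 1] t := by
    rw [Function.iterate_succ_apply', Function.iterate_succ_apply']
    show Real.exp a - 1 ≤ Real.exp (a - b) * (Real.exp b - 1)
    have h2 : Real.exp (a - b) ≤ 1 := Real.exp_le_one_iff.2 (by linarith)
    have h3 : Real.exp (a - b) * Real.exp b = Real.exp a := by
      rw [← Real.exp_add]; ring_nf
    nlinarith
  have hd : Real.exp (a - b) ≤ Real.exp (-((t - x) * Real.exp x ^ k)) := by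
    apply Real.exp_le_exp.2
    have := gap_lemma hxt k
    linarith
  rw [div_le_iff₀ hb1]
  calc (|s (k + 1 + 1)| : ℝ) ≤ Fe^[k + 1] x := hs
    _ ≤ Real.exp (a - b) * Fe^[k + 1] t := hstep
    _ ≤ Real.exp (-((t - x) * Real.exp x ^ k)) * Fe^[k + 1] t :=
        mul_le_mul_of_nonneg_right hd hb1.le

theorem minimal_potential_shift (s : ℕ → ℤ) (x : ℝ) (hx : 0 < x)
    (hbound : ∀ k, (|s (k + 1)| : ℝ) ≤ (fun t : ℝ => Real.exp t - 1)^[k] x) :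
    sInf {t : ℝ | 0 < t ∧ Tendsto
        (fun k => (|s (k + 2)| : ℝ) / (fun u : ℝ => Real.exp u - 1)^[k] t)
        atTop (nhds 0)} =
      Real.exp (sInf {t : ℝ | 0 < t ∧ Tendsto
        (fun k => (|s (k + 1)| : ℝ) / (fun u : ℝ => Real.exp u - 1)^[k] t)
        atTop (nhds 0)}) - 1 := by
  have hFe : (fun u : ℝ => Real.exp u - 1) = Fe := rfl
  simp only [hFe]
  set A := {t : ℝ | 0 < t ∧ Tendsto
      (fun k => (|s (k + 1)| : ℝ) / Fe^[k] t) atTop (nhds 0)} with hA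
  set B := {t : ℝ | 0 < t ∧ Tendsto
      (fun k => (|s (k + 2)| : ℝ) / Fe^[k] t) atTop (nhds 0)} with hB
  have hbound' : ∀ k, (|s (k + 1)| : ℝ) ≤ Fe^[k] x := hbound
  have hAne : A.Nonempty := ⟨x + 1, by linarith,
    tendsto_mem hx (by linarith) hbound'⟩
  have hAbdd : BddBelow A := ⟨0, fun t ht => ht.1.le⟩
  have hBA : B = Fe '' A := by
    ext u
    constructor
    · rintro ⟨hu, htend⟩
      refine ⟨Real.log (1 + u), ⟨Real.log_pos (by linarith), ?_⟩, ?_⟩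
      · rw [← tendsto_add_atTop_iff_nat 1]
        have : ∀ k : ℕ, Fe^[k + 1] (Real.log (1 + u)) = Fe^[k] u := by
          intro k
          rw [Function.iterate_succ_apply]
          congr 1
          simp [Fe, Real.exp_log (by linarith : (0:ℝ) < 1 + u)]
        simpa [this] using htend
      · simp [Fe, Real.exp_log (by linarith : (0:ℝ) < 1 + u)]
    · rintro ⟨t, ⟨ht, htend⟩, rfl⟩
      have hFt : 0 < Fe t := by
        have := Fe_strictMono ht
        simpa [Fe] using this
      refine ⟨hFt, ?_⟩
      have h2 : Tendsto (fun k => (|s (k + 1 + 1)| : ℝ) / Fe^[k + 1] t)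
          atTop (nhds 0) := (tendsto_add_atTop_iff_nat 1).2 htend
      have heq : (fun k => (|s (k + 2)| : ℝ) / Fe^[k] (Fe t))
          = fun k => (|s (k + 1 + 1)| : ℝ) / Fe^[k + 1] t := by
        funext k; rw [Function.iterate_succ_apply]
      exact heq ▸ h2
  rw [hBA]
  have hcont : ContinuousAt Fe (sInf A) :=
    (Real.continuous_exp.sub continuous_const).continuousAt
  have := Fe_strictMono.monotone.map_csInf_of_continuousAt hcont hAne hAbdd
  rw [← this]
  rfl
end

section
/- Let p > 0, t > t' > 0, and F(s) = e^s − 1. Then p·F^{∘(k−1)}(t') − F^{∘(k−1)}(t) → −∞ as k → ∞; consequently exp(p·F^{∘(k−1)}(t'))/exp(F^{∘(k−1)}(t)) → 0. -/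
open Filter

theorem parabola_condition (p t t' : ℝ) (hp : 0 < p) (ht' : 0 < t') (htt : t' < t) :
    Tendsto (fun k : ℕ =>
        p * (fun s : ℝ => Real.exp s - 1)^[k] t' - (fun s : ℝ => Real.exp s - 1)^[k] t)
      atTop atBot ∧
    Tendsto (fun k : ℕ =>
        Real.exp (p * (fun s : ℝ => Real.exp s - 1)^[k] t') /
          Real.exp ((fun s : ℝ => Real.exp s - 1)^[k] t))
      atTop (nhds 0) := by
  set F : ℝ → ℝ := fun s : ℝ => Real.exp s - 1 with hF
  have hFs : ∀ s : ℝ, s ≤ F s := fun s => by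
    have := Real.add_one_le_exp s; simp only [hF]; linarith
  have hb : ∀ k, t' ≤ F^[k] t' := by
    intro k; induction k with
    | zero => simp
    | succ n ih => rw [Function.iterate_succ_apply']; exact ih.trans (hFs _)
  have hmono : ∀ k, F^[k] t' < F^[k] t := by
    intro k; induction k with
    | zero => simpa
    | succ n ih =>
      rw [Function.iterate_succ_apply', Function.iterate_succ_apply']
      simpa [hF] using Real.exp_lt_exp.2 ih
  have hrec : ∀ k, F^[k+1] t - F^[k+1] t' = Real.exp (F^[k] t) - Real.exp (F^[k] t') := by
    intro k
    rw [Function.iterate_succ_apply', Function.iterate_succ_apply']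
    simp only [hF]; ring
  have hgrow : ∀ k, (1 + t') * (F^[k] t - F^[k] t') ≤ F^[k+1] t - F^[k+1] t' := by
    intro k
    rw [hrec]
    have h1 : Real.exp (F^[k] t) = Real.exp (F^[k] t') * Real.exp (F^[k] t - F^[k] t') := by
      rw [← Real.exp_add]; ring_nf
    have h2 : 1 + (F^[k] t - F^[k] t') ≤ Real.exp (F^[k] t - F^[k] t') := by
      have := Real.add_one_le_exp (F^[k] t - F^[k] t'); linarith
    have h3 : 1 + t' ≤ Real.exp (F^[k] t') := by
      have h4 := Real.add_one_le_exp t'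
      have h5 := Real.exp_le_exp.2 (hb k)
      linarith
    calc (1 + t') * (F^[k] t - F^[k] t')
        ≤ Real.exp (F^[k] t') * (F^[k] t - F^[k] t') :=
          mul_le_mul_of_nonneg_right h3 (by linarith [hmono k])
      _ ≤ Real.exp (F^[k] t') * (Real.exp (F^[k] t - F^[k] t') - 1) :=
          mul_le_mul_of_nonneg_left (by linarith) (Real.exp_pos _).le
      _ = Real.exp (F^[k] t) - Real.exp (F^[k] t') := by rw [h1]; ring
  have hgeo : ∀ k, (1 + t')^k * (t - t') ≤ F^[k] t - F^[k] t' := by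
    intro k; induction k with
    | zero => simp
    | succ n ih =>
      calc (1 + t')^(n+1) * (t - t') = (1 + t') * ((1 + t')^n * (t - t')) := by ring
        _ ≤ (1 + t') * (F^[n] t - F^[n] t') := mul_le_mul_of_nonneg_left ih (by linarith)
        _ ≤ _ := hgrow n
  have hdtop : Tendsto (fun k : ℕ => F^[k] t - F^[k] t') atTop atTop := by
    apply tendsto_atTop_mono hgeo
    exact Tendsto.atTop_mul_const (by linarith)
      (tendsto_pow_atTop_atTop_of_one_lt (by linarith))
  have main : Tendsto (fun k : ℕ => p * F^[k] t' - F^[k] t) atTop atBot := by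
    rw [tendsto_atBot]
    intro M
    set C : ℝ := max 0 (-M) + p with hCdef
    have hC0 : 0 ≤ C := by positivity
    have hCp : p ≤ C := by simp [hCdef, le_max_iff]
    have hCM : -M ≤ C := by
      have : -M ≤ max 0 (-M) := le_max_right _ _
      linarith
    have hev : ∀ᶠ k in atTop, C ≤ Real.exp (F^[k] t - F^[k] t') - 1 := by
      have h := hdtop.eventually_ge_atTop (Real.log (C + 1))
      filter_upwards [h] with k hk
      have h2 := Real.exp_le_exp.2 hk
      rw [Real.exp_log (by positivity)] at h2
      linarith
    obtain ⟨N, hN⟩ := eventually_atTop.1 hev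
    rw [eventually_atTop]
    refine ⟨N + 1, fun k hk => ?_⟩
    obtain ⟨m, rfl⟩ : ∃ m, k = m + 1 := ⟨k - 1, by omega⟩
    have hm : N ≤ m := by omega
    have hCm : C ≤ Real.exp (F^[m] t - F^[m] t') - 1 := hN m hm
    have heq : Real.exp (F^[m] t') = F^[m+1] t' + 1 := by
      rw [Function.iterate_succ_apply']; simp [hF]
    have hd : F^[m+1] t - F^[m+1] t'
        = (F^[m+1] t' + 1) * (Real.exp (F^[m] t - F^[m] t') - 1) := by
      rw [hrec, ← heq]
      rw [show F^[m] t = F^[m] t' + (F^[m] t - F^[m] t') by ring, Real.exp_add]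
      ring
    have hb1 : t' ≤ F^[m+1] t' := hb (m+1)
    nlinarith [hd, hCm, hb1, mul_le_mul_of_nonneg_left hCm (by linarith : (0:ℝ) ≤ F^[m+1] t' + 1)]
  refine ⟨main, ?_⟩
  have h2 : (fun k : ℕ => Real.exp (p * F^[k] t') / Real.exp (F^[k] t))
      = fun k : ℕ => Real.exp (p * F^[k] t' - F^[k] t) := by
    funext k; rw [Real.exp_sub]
  rw [h2]
  exact Real.tendsto_exp_atBot.comp main
end
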